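/- arXiv:1811.03261 — 5 statements merged into one kernel-verified Lean document; each statement's English description precedes it below -/
import Mathlib

section
/- Let $c$ be a positive continuous function on $(T,+\infty)$ such that $c(t)e^{-t}$ is decreasing in $t$ and $\int_T^{+\infty} c(t)e^{-t}\,dt < +\infty$. Then for every $t \in (T,+\infty)$, $\left(\int_T^t c(t_1)e^{-t_1}\,dt_1\right)^2 > c(t)e^{-t}\int_T^t\left(\int_T^{t_2} c(t_1)e^{-t_1}\,dt_1\right)dt_2$. -/
/-! Write `f = c e^{-t}` and `F(s) = ∫_T^s f`. Since `F' = f`, the fundamental theorem of calculus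
gives `∫_T^t F f = F(t)^2 / 2`. As `f` is decreasing and `F ≥ 0`, `f(t) F(s) ≤ F(s) f(s)` for
`s ≤ t`, so `f(t) ∫_T^t F ≤ F(t)^2 / 2`, which is strictly less than `F(t)^2` because `F(t) > 0`. -/

open MeasureTheory Real Set

namespace IntervalIntegrable

variable {f : ℝ → ℝ} {a b : ℝ}

theorem continuousOn_primitive_Icc (hf : IntervalIntegrable f volume a b) (hab : a ≤ b) :
    ContinuousOn (fun s => ∫ u in a..s, f u) (Icc a b) := by
  simpa only [uIcc_of_le hab] using
    intervalIntegral.continuousOn_primitive_interval' hf left_mem_uIcc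

theorem integral_primitive_mul_eq (hf : IntervalIntegrable f volume a b)
    (hf_cont : ContinuousOn f (Ioo a b)) (hab : a ≤ b) :
    ∫ s in a..b, (∫ u in a..s, f u) * f s = (∫ u in a..b, f u) ^ 2 / 2 := by
  have hF_cont := hf.continuousOn_primitive_Icc hab
  have hF_deriv : ∀ s ∈ Ioo a b,
      HasDerivAt (fun s => (∫ u in a..s, f u) ^ 2 / 2) ((∫ u in a..s, f u) * f s) s := by
    intro s hs
    have hF : HasDerivAt (fun s => ∫ u in a..s, f u) (f s) s :=
      intervalIntegral.integral_hasDerivAt_right (hf.mono_set (uIcc_subset_uIcc_left (by rw [uIcc_of_le hab]; exact Ioo_subset_Icc_self hs)))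
        (hf_cont.stronglyMeasurableAtFilter isOpen_Ioo s hs)
        (hf_cont.continuousAt (isOpen_Ioo.mem_nhds hs))
    exact ((hF.fun_pow 2).div_const 2).congr_deriv (by norm_num; ring)
  rw [intervalIntegral.integral_eq_sub_of_hasDerivAt_of_le hab ((hF_cont.pow 2).div_const 2)
    hF_deriv (hf.continuousOn_mul (by rwa [uIcc_of_le hab]))]
  simp

theorem mul_integral_primitive_le (hf : IntervalIntegrable f volume a b) (hab : a ≤ b)
    (hf_nonneg : ∀ s ∈ Ioc a b, 0 ≤ f s) (hf_anti : AntitoneOn f (Ioc a b)) :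
    f b * ∫ s in a..b, (∫ u in a..s, f u) ≤ ∫ s in a..b, (∫ u in a..s, f u) * f s := by
  have hF_cont := hf.continuousOn_primitive_Icc hab
  rw [← intervalIntegral.integral_const_mul]
  refine intervalIntegral.integral_mono_on_of_le_Ioo hab
    ((hF_cont.intervalIntegrable_of_Icc hab).const_mul _)
    (hf.continuousOn_mul (by rwa [uIcc_of_le hab])) fun s hs => ?_
  have hF_nonneg : 0 ≤ ∫ u in a..s, f u := by
    rw [intervalIntegral.integral_of_le hs.1.le]
    exact setIntegral_nonneg measurableSet_Ioc fun u hu =>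
      hf_nonneg u ⟨hu.1, hu.2.trans hs.2.le⟩
  rw [mul_comm (f b)]
  exact mul_le_mul_of_nonneg_left
    (hf_anti ⟨hs.1, hs.2.le⟩ ⟨hs.1.trans hs.2, le_rfl⟩ hs.2.le) hF_nonneg

theorem mul_integral_primitive_lt_sq (hf : IntervalIntegrable f volume a b)
    (hf_cont : ContinuousOn f (Ioo a b)) (hab : a < b)
    (hf_pos : ∀ s ∈ Ioc a b, 0 < f s) (hf_anti : AntitoneOn f (Ioc a b)) :
    f b * ∫ s in a..b, (∫ u in a..s, f u) < (∫ u in a..b, f u) ^ 2 := by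
  have hF_pos : 0 < ∫ u in a..b, f u :=
    intervalIntegral.intervalIntegral_pos_of_pos_on hf
      (fun s hs => hf_pos s (Ioo_subset_Ioc_self hs)) hab
  calc f b * ∫ s in a..b, (∫ u in a..s, f u)
      ≤ ∫ s in a..b, (∫ u in a..s, f u) * f s :=
        hf.mul_integral_primitive_le hab.le (fun s hs => (hf_pos s hs).le) hf_anti
    _ = (∫ u in a..b, f u) ^ 2 / 2 := hf.integral_primitive_mul_eq hf_cont hab.le
    _ < (∫ u in a..b, f u) ^ 2 := by nlinarith

end IntervalIntegrable

theorem stmt_0 (T : ℝ) (c : ℝ → ℝ)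
    (hc_cont : ContinuousOn c (Ioi T))
    (hc_pos : ∀ t ∈ Ioi T, 0 < c t)
    (hc_dec : ∀ s ∈ Ioi T, ∀ t ∈ Ioi T, s ≤ t → c t * exp (-t) ≤ c s * exp (-s))
    (hc_int : IntegrableOn (fun t => c t * exp (-t)) (Ioi T)) :
    ∀ t ∈ Ioi T,
      c t * exp (-t) * (∫ t2 in T..t, ∫ t1 in T..t2, c t1 * exp (-t1)) <
        (∫ t1 in T..t, c t1 * exp (-t1)) ^ 2 := by
  intro t ht
  have hf_int : IntervalIntegrable (fun s => c s * exp (-s)) volume T t :=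
    (intervalIntegrable_iff_integrableOn_Ioc_of_le (le_of_lt ht)).2
      (hc_int.mono_set Ioc_subset_Ioi_self)
  have hf_cont : ContinuousOn (fun s => c s * exp (-s)) (Ioo T t) :=
    (hc_cont.mono Ioo_subset_Ioi_self).mul (by fun_prop)
  exact hf_int.mul_integral_primitive_lt_sq hf_cont ht
    (fun s hs => mul_pos (hc_pos s hs.1) (exp_pos _))
    (fun s hs r hr hsr => hc_dec s hs.1 r hr.1 hsr)
end

section
/- Let $\mu$ be a measure, $f \ge 0$ measurable, $\psi < -T$ measurable, $c$ positive continuous on $(T,+\infty)$ with $\int_T^{+\infty} c(t)e^{-t}dt < \infty$, and $a$ a positive increasing $C^1$ function on $[T,+\infty)$ with $\lim_{t\to+\infty} a(t)\int_t^{+\infty} c(t_1)e^{-t_1}dt_1 = 0$. Fix $t_0 \ge T$ and assume $0 < \int_{\{\psi<-t_0\}} f\,d\mu < \infty$, $\int_{\{\psi<-t_0\}} a(-\psi) f\,d\mu < \infty$, and that for all $t \ge t_0$: $\frac{\int_{\{\psi<-t\}} f\,d\mu}{\int_{\{\psi<-t_0\}} f\,d\mu} \ge \frac{\int_t^{+\infty}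 c(t_1)e^{-t_1}dt_1}{\int_{t_0}^{+\infty} c(t_1)e^{-t_1}dt_1}$. Then $\frac{\int_{\{\psi<-t_0\}} a(-\psi) f\,d\mu}{\int_{\{\psi<-t_0\}} f\,d\mu} \ge \frac{\int_{t_0}^{+\infty} c(t)e^{-t}a(t)\,dt}{\int_{t_0}^{+\infty} c(t)e^{-t}\,dt}$. -/
open MeasureTheory Real Set Filter Topology

lemma master {X : Type*} [MeasurableSpace X] (ρ : Measure X) (ψ : X → ℝ) (hψm : Measurable ψ)
    (T t0 : ℝ) (ht0 : T ≤ t0) (a a' : ℝ → ℝ)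
    (hftc : ∀ s, t0 < s → ∫ t in t0..s, a' t = a s - a t0)
    (hii : ∀ t : ℝ, 0 < t → IntervalIntegrable (fun u => a' (u + t0)) volume 0 t)
    (ha'_nonneg : ∀ t ∈ Ioi T, 0 ≤ a' t)
    (ha_mono : MonotoneOn a (Ici T))
    (f : X → ℝ) (hf_int : Integrable f ρ) (hf_nonneg : 0 ≤ᵐ[ρ] f)
    (hψ_ae : ∀ᵐ x ∂ρ, ψ x < -t0)
    (ha_comp : AEMeasurable (fun x => a (-ψ x)) ρ) :
    ∫⁻ x, ENNReal.ofReal ((a (-ψ x) - a t0) * f x) ∂ρ =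
      ∫⁻ t in Ioi 0, ENNReal.ofReal (∫ x in {y | ψ y < -(t + t0)}, f x ∂ρ) *
        ENNReal.ofReal (a' (t + t0)) := by
  set ρ' : Measure X := ρ.withDensity (fun x => ENNReal.ofReal (f x)) with hρ'
  have hfd : AEMeasurable (fun x => ENNReal.ofReal (f x)) ρ :=
    (ENNReal.measurable_ofReal.comp_aemeasurable hf_int.aemeasurable)
  have hac : ρ' ≪ ρ := withDensity_absolutelyContinuous ρ _
  have hψ' : ∀ᵐ x ∂ρ', ψ x < -t0 := hac.ae_le hψ_ae
  have key := lintegral_comp_eq_lintegral_meas_lt_mul ρ'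
    (f := fun x => -ψ x - t0) (g := fun t => a' (t + t0))
    (hψ'.mono fun x hx => by simp only [Pi.zero_apply]; linarith)
    (((hψm.neg.sub_const t0).aemeasurable).mono_measure le_rfl |>.mono_ac hac)
    (fun t ht => hii t ht)
    (((ae_restrict_iff' measurableSet_Ioi).2 (Filter.Eventually.of_forall
      (fun t ht => ha'_nonneg _ (by simp only [mem_Ioi] at ht ⊢; linarith)))))
  -- left side
  have hL : ∫⁻ x, ENNReal.ofReal (∫ t in (0:ℝ)..(-ψ x - t0), a' (t + t0)) ∂ρ' =
      ∫⁻ x, ENNReal.ofReal ((a (-ψ x) - a t0) * f x) ∂ρ := by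
    have h1 : ∫⁻ x, ENNReal.ofReal (∫ t in (0:ℝ)..(-ψ x - t0), a' (t + t0)) ∂ρ' =
        ∫⁻ x, ENNReal.ofReal (a (-ψ x) - a t0) ∂ρ' := by
      apply lintegral_congr_ae
      filter_upwards [hψ'] with x hx
      have h2 : t0 < -ψ x := by linarith
      rw [intervalIntegral.integral_comp_add_right, zero_add, sub_add_cancel, hftc _ h2]
    have hg : AEMeasurable (fun x => ENNReal.ofReal (a (-ψ x) - a t0)) ρ :=
      ENNReal.measurable_ofReal.comp_aemeasurable (ha_comp.sub_const _)
    rw [h1, hρ', lintegral_withDensity_eq_lintegral_mul₀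
      (g := fun x => ENNReal.ofReal (a (-ψ x) - a t0)) hfd hg]
    apply lintegral_congr_ae
    filter_upwards [hψ_ae, hf_nonneg] with x hx hfx
    have h3 : a t0 ≤ a (-ψ x) :=
      ha_mono (mem_Ici.2 ht0) (mem_Ici.2 (by linarith)) (by linarith)
    simp only [Pi.mul_apply]
    rw [mul_comm, ← ENNReal.ofReal_mul (by linarith : (0:ℝ) ≤ a (-ψ x) - a t0)]
  -- right side
  have hR : ∀ t : ℝ, ρ' {x | t < -ψ x - t0} =
      ENNReal.ofReal (∫ x in {y | ψ y < -(t + t0)}, f x ∂ρ) := by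
    intro t
    have hset : {x | t < -ψ x - t0} = {y | ψ y < -(t + t0)} := by
      ext x; simp only [mem_setOf_eq]; constructor <;> intro h <;> linarith
    have hmeas : MeasurableSet {y | ψ y < -(t + t0)} := hψm measurableSet_Iio
    rw [hset, hρ', withDensity_apply _ hmeas,
      ← ofReal_integral_eq_lintegral_ofReal hf_int.restrict
        (ae_restrict_of_ae hf_nonneg)]
  rw [hL] at key
  rw [key]
  exact lintegral_congr fun t => by rw [hR t]
theorem stmt_4 (T : ℝ) {X : Type*} [MeasurableSpace X] (μ : Measure X)
    (f : X → ℝ) (hf_meas : Measurable f) (hf_nonneg : ∀ x, 0 ≤ f x)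
    (ψ : X → ℝ) (hψ_meas : Measurable ψ) (hψ : ∀ x, ψ x < -T)
    (c : ℝ → ℝ)
    (hc_cont : ContinuousOn c (Ioi T))
    (hc_pos : ∀ t ∈ Ioi T, 0 < c t)
    (hc_int : IntegrableOn (fun t => c t * exp (-t)) (Ioi T))
    (a a' : ℝ → ℝ)
    (ha_pos : ∀ t ∈ Ici T, 0 < a t)
    (ha_mono : MonotoneOn a (Ici T))
    (ha_cont : ContinuousOn a (Ici T))
    (ha_deriv : ∀ t ∈ Ioi T, HasDerivAt a (a' t) t)
    (ha'_cont : ContinuousOn a' (Ioi T))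
    (hlim : Tendsto (fun t => a t * ∫ t1 in Ioi t, c t1 * exp (-t1)) atTop (nhds 0))
    (t0 : ℝ) (ht0 : T ≤ t0)
    (hf_int : IntegrableOn f {y | ψ y < -t0} μ)
    (hf_pos : 0 < ∫ x in {y | ψ y < -t0}, f x ∂μ)
    (haf_int : IntegrableOn (fun x => a (-ψ x) * f x) {y | ψ y < -t0} μ)
    (hratio : ∀ t ≥ t0,
      (∫ t1 in Ioi t, c t1 * exp (-t1)) / (∫ t1 in Ioi t0, c t1 * exp (-t1)) ≤
        (∫ x in {y | ψ y < -t}, f x ∂μ) / (∫ x in {y | ψ y < -t0}, f x ∂μ)) :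
    (∫ t in Ioi t0, c t * exp (-t) * a t) / (∫ t in Ioi t0, c t * exp (-t)) ≤
      (∫ x in {y | ψ y < -t0}, a (-ψ x) * f x ∂μ) / (∫ x in {y | ψ y < -t0}, f x ∂μ) := by
  have hS0m : MeasurableSet {y | ψ y < -t0} := hψ_meas measurableSet_Iio
  set S0 := {y | ψ y < -t0} with hS0def
  set F0 := ∫ x in S0, f x ∂μ with hF0def
  set G0 := ∫ t in Ioi t0, c t * exp (-t) with hG0def
  -- a' is nonnegative on (T, ∞)
  have ha'_nonneg : ∀ t ∈ Ioi T, 0 ≤ a' t := by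
    intro t ht
    have h := hasDerivAt_iff_tendsto_slope.mp (ha_deriv t ht)
    have h2 : Tendsto (slope a t) (𝓝[>] t) (𝓝 (a' t)) :=
      h.mono_left (nhdsWithin_mono t fun s hs => ne_of_gt hs)
    refine ge_of_tendsto h2 ?_
    filter_upwards [self_mem_nhdsWithin] with s hs
    rw [slope_def_field]
    have hts : t < s := hs
    exact div_nonneg (sub_nonneg.2 (ha_mono (mem_Ici.2 ht.le)
      (mem_Ici.2 (ht.le.trans hts.le)) hts.le)) (by linarith)
  -- interval integrability and FTC for a'
  have hInt : ∀ s, t0 < s → IntervalIntegrable a' volume t0 s := by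
    intro s hs
    rw [intervalIntegrable_iff_integrableOn_Ioc_of_le hs.le]
    exact intervalIntegral.integrableOn_deriv_of_nonneg
      (ha_cont.mono fun u hu => le_trans ht0 hu.1)
      (fun u hu => ha_deriv u (lt_of_le_of_lt ht0 hu.1))
      (fun u hu => ha'_nonneg u (lt_of_le_of_lt ht0 hu.1))
  have hftc : ∀ s, t0 < s → ∫ t in t0..s, a' t = a s - a t0 := fun s hs =>
    intervalIntegral.integral_eq_sub_of_hasDeriv_right_of_le hs.le
      (ha_cont.mono fun u hu => le_trans ht0 hu.1)
      (fun u hu => (ha_deriv u (lt_of_le_of_lt ht0 hu.1)).hasDerivWithinAt)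
      (hInt s hs)
  have hii : ∀ t : ℝ, 0 < t → IntervalIntegrable (fun u => a' (u + t0)) volume 0 t := by
    intro t ht
    have h := (hInt (t + t0) (by linarith)).comp_add_right t0
    simpa using h
  -- positivity of G0
  have hgc_int : IntegrableOn (fun t => c t * exp (-t)) (Ioi t0) :=
    hc_int.mono_set (Ioi_subset_Ioi ht0)
  have hg_pos : ∀ s ∈ Ioi t0, 0 < c s * exp (-s) := fun s hs =>
    mul_pos (hc_pos s (lt_of_le_of_lt ht0 hs)) (exp_pos _)
  have hg_nonneg : 0 ≤ᵐ[volume.restrict (Ioi t0)] fun s => c s * exp (-s) :=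
    (ae_restrict_iff' measurableSet_Ioi).2 (Filter.Eventually.of_forall fun s hs => (hg_pos s hs).le)
  have hG0 : 0 < G0 := by
    rw [hG0def, setIntegral_pos_iff_support_of_nonneg_ae hg_nonneg hgc_int]
    have hsub : Ioi t0 ⊆ Function.support (fun s => c s * exp (-s)) ∩ Ioi t0 :=
      fun s hs => ⟨ne_of_gt (hg_pos s hs), hs⟩
    refine lt_of_lt_of_le ?_ (measure_mono hsub)
    rw [Real.volume_Ioi]; simp
  -- μ-side master identity
  have hψae1 : ∀ᵐ x ∂(μ.restrict S0), ψ x < -t0 := (ae_restrict_mem hS0m).mono fun x hx => hx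
  have hacomp1 : AEMeasurable (fun x => a (-ψ x)) (μ.restrict S0) := by
    have hcont : Continuous fun s : ℝ => a (max s T) :=
      ha_cont.comp_continuous (continuous_id.max continuous_const)
        (fun s => mem_Ici.2 (le_max_right s T))
    have heq : (fun x => a (-ψ x)) = fun x => a (max (-ψ x) T) := funext fun x => by
      rw [max_eq_left (le_of_lt (by linarith [hψ x]))]
    rw [heq]
    exact (hcont.measurable.comp hψ_meas.neg).aemeasurable
  have M1 := master (μ.restrict S0) ψ hψ_meas T t0 ht0 a a' hftc hii ha'_nonneg ha_mono f
    hf_int (Filter.Eventually.of_forall hf_nonneg) hψae1 hacomp1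
  have M1' : ∫⁻ x, ENNReal.ofReal ((a (-ψ x) - a t0) * f x) ∂(μ.restrict S0) =
      ∫⁻ t in Ioi 0, ENNReal.ofReal (∫ x in {y | ψ y < -(t + t0)}, f x ∂μ) *
        ENNReal.ofReal (a' (t + t0)) := by
    rw [M1]
    apply lintegral_congr_ae
    filter_upwards [ae_restrict_mem measurableSet_Ioi] with t ht
    have hrr : ∫ x in {y | ψ y < -(t + t0)}, f x ∂(μ.restrict S0) =
        ∫ x in {y | ψ y < -(t + t0)}, f x ∂μ := by
      have hm : MeasurableSet {y | ψ y < -(t + t0)} := measurableSet_lt hψ_meas measurable_const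
      have hss : {y | ψ y < -(t + t0)} ∩ S0 = {y | ψ y < -(t + t0)} := by
        refine inter_eq_left.2 fun y hy => ?_
        have ht' : (0:ℝ) < t := ht
        have h4 : ψ y < -(t + t0) := hy
        show ψ y < -t0
        linarith
      rw [Measure.restrict_restrict hm, hss]
    rw [hrr]
  have hsub_int : Integrable (fun x => (a (-ψ x) - a t0) * f x) (μ.restrict S0) := by
    have heq : (fun x => (a (-ψ x) - a t0) * f x) =
        fun x => a (-ψ x) * f x - a t0 * f x := funext fun x => by ring
    rw [heq]
    exact haf_int.sub (hf_int.const_mul _)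
  have hsub_nonneg : 0 ≤ᵐ[μ.restrict S0] fun x => (a (-ψ x) - a t0) * f x := by
    filter_upwards [hψae1] with x hx
    have h3 : a t0 ≤ a (-ψ x) := ha_mono (mem_Ici.2 ht0) (mem_Ici.2 (by linarith)) (by linarith)
    exact mul_nonneg (by linarith) (hf_nonneg x)
  set B' := ∫ x in S0, (a (-ψ x) - a t0) * f x ∂μ with hB'def
  have hB'eq : ENNReal.ofReal B' =
      ∫⁻ t in Ioi 0, ENNReal.ofReal (∫ x in {y | ψ y < -(t + t0)}, f x ∂μ) *
        ENNReal.ofReal (a' (t + t0)) := by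
    rw [hB'def, ofReal_integral_eq_lintegral_ofReal hsub_int hsub_nonneg, M1']
  -- G-side master identity
  have hψae2 : ∀ᵐ s ∂(volume.restrict (Ioi t0)), -s < -t0 :=
    (ae_restrict_mem measurableSet_Ioi).mono fun s hs => neg_lt_neg hs
  have hacomp2 : AEMeasurable (fun s : ℝ => a (- -s)) (volume.restrict (Ioi t0)) := by
    simp only [neg_neg]
    exact (ha_cont.mono fun u hu => le_trans ht0 (le_of_lt hu)).aemeasurable measurableSet_Ioi
  have M2 := master (volume.restrict (Ioi t0)) (fun s => -s) measurable_id.neg T t0 ht0 a a'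
    hftc hii ha'_nonneg ha_mono (fun s => c s * exp (-s)) hgc_int hg_nonneg hψae2 hacomp2
  simp only [neg_neg] at M2
  have M2' : ∫⁻ s, ENNReal.ofReal ((a s - a t0) * (c s * exp (-s))) ∂(volume.restrict (Ioi t0)) =
      ∫⁻ t in Ioi 0, ENNReal.ofReal (∫ s in Ioi (t + t0), c s * exp (-s)) *
        ENNReal.ofReal (a' (t + t0)) := by
    rw [M2]
    apply lintegral_congr_ae
    filter_upwards [ae_restrict_mem measurableSet_Ioi] with t ht
    have ht' : (0:ℝ) < t := ht
    have hset : {y : ℝ | -y < -(t + t0)} = Ioi (t + t0) := by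
      ext y; simp only [mem_setOf_eq, mem_Ioi]; constructor <;> intro h <;> linarith
    rw [hset, Measure.restrict_restrict measurableSet_Ioi,
      inter_eq_self_of_subset_left (Ioi_subset_Ioi (by linarith))]
  -- comparison via hratio
  have hB'_nonneg : 0 ≤ B' := integral_nonneg_of_ae hsub_nonneg
  have hcomp : ∀ᵐ t ∂(volume.restrict (Ioi (0:ℝ))),
      ENNReal.ofReal (∫ s in Ioi (t + t0), c s * exp (-s)) * ENNReal.ofReal (a' (t + t0)) ≤
      ENNReal.ofReal (G0 / F0) *
        (ENNReal.ofReal (∫ x in {y | ψ y < -(t + t0)}, f x ∂μ) *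
          ENNReal.ofReal (a' (t + t0))) := by
    filter_upwards [ae_restrict_mem measurableSet_Ioi] with t ht
    have ht' : (0:ℝ) < t := ht
    have hr := hratio (t + t0) (by linarith)
    have hGt : (∫ s in Ioi (t + t0), c s * exp (-s)) ≤
        G0 / F0 * (∫ x in {y | ψ y < -(t + t0)}, f x ∂μ) := by
      have h1 := mul_le_mul_of_nonneg_right hr hG0.le
      rw [div_mul_cancel₀ _ (ne_of_gt hG0)] at h1
      have h2 : (∫ x in {y | ψ y < -(t + t0)}, f x ∂μ) / F0 * G0 =
          G0 / F0 * (∫ x in {y | ψ y < -(t + t0)}, f x ∂μ) := by ring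
      linarith
    calc ENNReal.ofReal (∫ s in Ioi (t + t0), c s * exp (-s)) * ENNReal.ofReal (a' (t + t0))
        ≤ ENNReal.ofReal (G0 / F0 * (∫ x in {y | ψ y < -(t + t0)}, f x ∂μ)) *
          ENNReal.ofReal (a' (t + t0)) :=
          mul_le_mul_left (ENNReal.ofReal_le_ofReal hGt) _
      _ = ENNReal.ofReal (G0 / F0) *
          (ENNReal.ofReal (∫ x in {y | ψ y < -(t + t0)}, f x ∂μ) *
            ENNReal.ofReal (a' (t + t0))) := by
          rw [ENNReal.ofReal_mul (div_nonneg hG0.le hf_pos.le), mul_assoc]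
  have hle : (∫⁻ s in Ioi t0, ENNReal.ofReal ((a s - a t0) * (c s * exp (-s)))) ≤
      ENNReal.ofReal (G0 / F0 * B') := by
    calc (∫⁻ s in Ioi t0, ENNReal.ofReal ((a s - a t0) * (c s * exp (-s))))
        = ∫⁻ t in Ioi 0, ENNReal.ofReal (∫ s in Ioi (t + t0), c s * exp (-s)) *
            ENNReal.ofReal (a' (t + t0)) := M2'
      _ ≤ ∫⁻ t in Ioi 0, ENNReal.ofReal (G0 / F0) *
            (ENNReal.ofReal (∫ x in {y | ψ y < -(t + t0)}, f x ∂μ) *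
              ENNReal.ofReal (a' (t + t0))) := lintegral_mono_ae hcomp
      _ = ENNReal.ofReal (G0 / F0) *
            ∫⁻ t in Ioi 0, ENNReal.ofReal (∫ x in {y | ψ y < -(t + t0)}, f x ∂μ) *
              ENNReal.ofReal (a' (t + t0)) := lintegral_const_mul' _ _ ENNReal.ofReal_ne_top
      _ = ENNReal.ofReal (G0 / F0) * ENNReal.ofReal B' := by rw [← hB'eq]
      _ = ENNReal.ofReal (G0 / F0 * B') :=
          (ENNReal.ofReal_mul (div_nonneg hG0.le hf_pos.le)).symm
  -- integrability of (a - a t0) * g on (t0, ∞)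
  have hD_meas : AEStronglyMeasurable (fun s => (a s - a t0) * (c s * exp (-s)))
      (volume.restrict (Ioi t0)) :=
    ContinuousOn.aestronglyMeasurable
      (((ha_cont.mono fun u hu => le_trans ht0 (le_of_lt hu)).sub continuousOn_const).mul
        ((hc_cont.mono fun u hu => lt_of_le_of_lt ht0 hu).mul
          (Real.continuous_exp.comp continuous_neg).continuousOn)) measurableSet_Ioi
  have hD_nonneg : 0 ≤ᵐ[volume.restrict (Ioi t0)]
      fun s => (a s - a t0) * (c s * exp (-s)) :=
    (ae_restrict_iff' measurableSet_Ioi).2 (Filter.Eventually.of_forall fun s hs =>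
      mul_nonneg (sub_nonneg.2 (ha_mono (mem_Ici.2 ht0)
        (mem_Ici.2 (le_trans ht0 (le_of_lt hs))) (le_of_lt hs))) (hg_pos s hs).le)
  have hD_int : IntegrableOn (fun s => (a s - a t0) * (c s * exp (-s))) (Ioi t0) := by
    refine ⟨hD_meas, ?_⟩
    rw [hasFiniteIntegral_iff_ofReal hD_nonneg]
    exact lt_of_le_of_lt hle ENNReal.ofReal_lt_top
  set D := ∫ s in Ioi t0, (a s - a t0) * (c s * exp (-s)) with hDdef
  have hD_le : D ≤ G0 / F0 * B' := by
    have h := hle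
    rw [← ofReal_integral_eq_lintegral_ofReal hD_int hD_nonneg] at h
    exact (ENNReal.ofReal_le_ofReal_iff
      (mul_nonneg (div_nonneg hG0.le hf_pos.le) hB'_nonneg)).1 h
  -- final algebra
  have hAD : (∫ t in Ioi t0, c t * exp (-t) * a t) = D + a t0 * G0 := by
    rw [show (fun t => c t * exp (-t) * a t) =
      fun s => (a s - a t0) * (c s * exp (-s)) + a t0 * (c s * exp (-s))
      from funext fun s => by ring]
    rw [integral_add hD_int (hgc_int.const_mul _), integral_const_mul, hDdef, hG0def]
  have hB : (∫ x in S0, a (-ψ x) * f x ∂μ) = B' + a t0 * F0 := by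
    have h1 : B' = (∫ x in S0, a (-ψ x) * f x ∂μ) - a t0 * F0 := by
      rw [hB'def, show (fun x => (a (-ψ x) - a t0) * f x) =
        fun x => a (-ψ x) * f x - a t0 * f x from funext fun x => by ring]
      rw [integral_sub haf_int (hf_int.const_mul _), integral_const_mul, hF0def]
    linarith
  rw [hAD, hB, div_le_div_iff₀ hG0 hf_pos]
  have h2 := mul_le_mul_of_nonneg_right hD_le hf_pos.le
  have h3 : G0 / F0 * B' * F0 = G0 * B' := by field_simp
  nlinarith [h2, h3]
end

section
/- Let $\mu, f, \psi, c, a, t_0$ be as before, with additionally $a'(t) > 0$ for all $t > t_0$. If equality holds in the conclusion $\frac{\int_{\{\psi<-t_0\}} a(-\psi) f\,d\mu}{\int_{\{\psi<-t_0\}} f\,d\mu} = \frac{\int_{t_0}^{+\infty} c(t)e^{-t}a(t)\,dt}{\int_{t_0}^{+\infty} c(t)e^{-t}\,dt}$, and the map $t \mapsto \int_{\{\psi<-t\}} f\,d\mu$ is right-continuous, then for every $t \ge t_0$: $\frac{\int_{\{\psi<-t\}} f\,d\mu}{\int_{\{\psi<-t_0\}} f\,d\mu} = \frac{\int_t^{+\infty}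 c(t_1)e^{-t_1}dt_1}{\int_{t_0}^{+\infty} c(t_1)e^{-t_1}dt_1}$. -/
/-!
Write `F s = ∫_{ψ < -s} f` and `G s = ∫_s^∞ c(t) e^{-t} dt`. By the layer cake formula,
`∫_{ψ < -t₀} a(-ψ) f = a(t₀) F(t₀) + ∫_{t₀}^∞ a'(s) F(s) ds`, and likewise for `G` with the
measure `c(t) e^{-t} dt` on `(t₀, ∞)`. The ratio hypothesis `G(s)/G(t₀) ≤ F(s)/F(t₀)` makes
`∫ a' G` finite, and equality of the two normalized means of `a` then says that
`∫_{t₀}^∞ a'(s) (F(s)/F(t₀) - G(s)/G(t₀)) ds = 0` with a nonnegative integrand. As `a' > 0`,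
the two ratios agree almost everywhere on `(t₀, ∞)`, hence everywhere by right continuity.
-/

open MeasureTheory Real Set Filter
open scoped Topology

section

variable {Ω : Type*} [MeasurableSpace Ω] {μ : Measure Ω} {φ g : Ω → ℝ} {a a' : ℝ → ℝ} {t₀ : ℝ}

theorem monotoneOn_Ici_of_hasDerivAt_nonneg (ha : ContinuousOn a (Ici t₀))
    (ha' : ∀ t ∈ Ioi t₀, HasDerivAt a (a' t) t) (ha'_nonneg : ∀ t ∈ Ioi t₀, 0 ≤ a' t) :
    MonotoneOn a (Ici t₀) :=
  monotoneOn_of_hasDerivWithinAt_nonneg (convex_Ici t₀) ha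
    (by simpa using fun t ht => (ha' t ht).hasDerivWithinAt) (by simpa using ha'_nonneg)

theorem lintegral_ofReal_sub_eq_lintegral_meas_lt_mul (hφ : AEMeasurable φ μ)
    (hφt₀ : ∀ᵐ x ∂μ, t₀ ≤ φ x) (ha : ContinuousOn a (Ici t₀))
    (ha' : ∀ t ∈ Ioi t₀, HasDerivAt a (a' t) t) (ha'_nonneg : ∀ t ∈ Ioi t₀, 0 ≤ a' t) :
    ∫⁻ x, ENNReal.ofReal (a (φ x) - a t₀) ∂μ =
      ∫⁻ s in Ioi t₀, μ {x | s < φ x} * ENNReal.ofReal (a' s) := by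
  have hint : ∀ b, t₀ ≤ b → IntervalIntegrable a' volume t₀ b := fun b hb =>
    (intervalIntegrable_iff_integrableOn_Ioc_of_le hb).2 <|
      intervalIntegral.integrableOn_deriv_of_nonneg (ha.mono Icc_subset_Ici_self)
        (fun t ht => ha' t ht.1) (fun t ht => ha'_nonneg t ht.1)
  have hFTC : ∀ b, t₀ ≤ b → ∫ t in t₀..b, a' t = a b - a t₀ := fun b hb =>
    intervalIntegral.integral_eq_sub_of_hasDerivAt_of_le hb (ha.mono Icc_subset_Ici_self)
      (fun t ht => ha' t ht.1) (hint b hb)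
  -- the library's layer cake formula is based at `0`, so shift by `t₀`
  have hshift := lintegral_comp_eq_lintegral_meas_lt_mul μ (f := fun x => φ x - t₀)
    (g := fun t => a' (t + t₀)) (by filter_upwards [hφt₀] with x hx; simpa using hx)
    (hφ.sub_const t₀) (fun t ht => by simpa using (hint (t + t₀) (by linarith)).comp_add_right t₀)
    ((ae_restrict_iff' measurableSet_Ioi).2 (ae_of_all _ fun t (ht : 0 < t) =>
      ha'_nonneg _ (by simp [ht])))
  have hlhs : ∀ᵐ x ∂μ, ENNReal.ofReal (∫ t in (0)..(φ x - t₀), a' (t + t₀)) =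
      ENNReal.ofReal (a (φ x) - a t₀) := by
    filter_upwards [hφt₀] with x hx
    rw [intervalIntegral.integral_comp_add_right, zero_add, sub_add_cancel, hFTC _ hx]
  have htrans := (measurePreserving_add_right volume t₀).setLIntegral_comp_preimage_emb
    (measurableEmbedding_addRight t₀) (fun s => μ {x | s < φ x} * ENNReal.ofReal (a' s)) (Ioi t₀)
  rw [preimage_add_const_Ioi, sub_self] at htrans
  rw [← lintegral_congr_ae hlhs, hshift, ← htrans]
  simp only [lt_sub_iff_add_lt]

noncomputable def tailIntegral (μ : Measure Ω) (φ g : Ω → ℝ) (s : ℝ) : ℝ :=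
  ∫ x in {x | s < φ x}, g x ∂μ

theorem antitoneOn_tailIntegral (hφ : Measurable φ)
    (hg : IntegrableOn g {x | t₀ < φ x} μ) (hg_nonneg : ∀ x, t₀ < φ x → 0 ≤ g x) :
    AntitoneOn (tailIntegral μ φ g) (Ici t₀) := fun s hs r _ hsr =>
  setIntegral_mono_set (hg.mono_set fun x (hx : s < φ x) => lt_of_le_of_lt hs hx)
    ((ae_restrict_iff' (measurableSet_lt measurable_const hφ)).2
      (ae_of_all _ fun x (hx : s < φ x) => hg_nonneg x (lt_of_le_of_lt hs hx)))
    (LE.le.eventuallyLE fun x (hx : r < φ x) => lt_of_le_of_lt hsr hx)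

theorem tailIntegral_nonneg (hφ : Measurable φ) {s : ℝ} (hs : t₀ ≤ s)
    (hg_nonneg : ∀ x, t₀ < φ x → 0 ≤ g x) : 0 ≤ tailIntegral μ φ g s :=
  setIntegral_nonneg (measurableSet_lt measurable_const hφ) fun x (hx : s < φ x) =>
    hg_nonneg x (lt_of_le_of_lt hs hx)

theorem lintegral_ofReal_mul_sub_eq_lintegral_ofReal_tailIntegral_mul (hφ : Measurable φ)
    (hg : IntegrableOn g {x | t₀ < φ x} μ) (hg_nonneg : ∀ x, t₀ < φ x → 0 ≤ g x)
    (ha : ContinuousOn a (Ici t₀))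
    (ha' : ∀ t ∈ Ioi t₀, HasDerivAt a (a' t) t) (ha'_nonneg : ∀ t ∈ Ioi t₀, 0 ≤ a' t) :
    ∫⁻ x in {x | t₀ < φ x}, ENNReal.ofReal (g x * (a (φ x) - a t₀)) ∂μ =
      ∫⁻ s in Ioi t₀, ENNReal.ofReal (tailIntegral μ φ g s * a' s) := by
  have hlevel : ∀ s, MeasurableSet {x | s < φ x} := fun s => measurableSet_lt measurable_const hφ
  have hlayer := lintegral_ofReal_sub_eq_lintegral_meas_lt_mul
    (μ := (μ.restrict {x | t₀ < φ x}).withDensity fun x => ENNReal.ofReal (g x)) hφ.aemeasurable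
    (((ae_restrict_mem (hlevel t₀)).mono fun x (hx : t₀ < φ x) => hx.le).filter_mono
      (withDensity_absolutelyContinuous _ _).ae_le) ha ha' ha'_nonneg
  rw [lintegral_withDensity_eq_lintegral_mul_non_measurable₀ _
    hg.aestronglyMeasurable.aemeasurable.ennreal_ofReal
    (ae_of_all _ fun _ => ENNReal.ofReal_lt_top)]
    at hlayer
  convert hlayer using 1
  · refine setLIntegral_congr_fun (hlevel t₀) fun x (hx : t₀ < φ x) => ?_
    rw [Pi.mul_apply, ENNReal.ofReal_mul (hg_nonneg x hx)]
  · refine setLIntegral_congr_fun measurableSet_Ioi fun s (hs : t₀ < s) => ?_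
    have hsub : {x | s < φ x} ⊆ {x | t₀ < φ x} := fun x (hx : s < φ x) => hs.trans hx
    rw [withDensity_apply _ (hlevel s), Measure.restrict_restrict (hlevel s), inter_eq_left.2 hsub,
      ← ofReal_integral_eq_lintegral_ofReal (hg.mono_set hsub)
        ((ae_restrict_iff' (hlevel s)).2 (ae_of_all _ fun x hx => hg_nonneg x (hsub hx))),
      ← ENNReal.ofReal_mul (setIntegral_nonneg (hlevel s) fun x hx => hg_nonneg x (hsub hx))]
    rfl

theorem aestronglyMeasurable_comp_restrict_setOf_lt (hφ : Measurable φ)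
    (ha : ContinuousOn a (Ici t₀)) :
    AEStronglyMeasurable (fun x => a (φ x)) (μ.restrict {x | t₀ < φ x}) := by
  have hext : Continuous fun t => a (max t₀ t) :=
    ha.comp_continuous (continuous_const.max continuous_id) fun t => mem_Ici.2 (le_max_left _ _)
  refine (hext.measurable.comp hφ).aestronglyMeasurable.congr ?_
  filter_upwards [ae_restrict_mem (measurableSet_lt measurable_const hφ)] with x (hx : t₀ < φ x)
  simp [max_eq_right hx.le]

theorem aestronglyMeasurable_tailIntegral_mul (hφ : Measurable φ)
    (hg : IntegrableOn g {x | t₀ < φ x} μ) (hg_nonneg : ∀ x, t₀ < φ x → 0 ≤ g x)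
    (ha' : ∀ t ∈ Ioi t₀, HasDerivAt a (a' t) t) :
    AEStronglyMeasurable (fun s => tailIntegral μ φ g s * a' s) (volume.restrict (Ioi t₀)) := by
  have htail := aemeasurable_restrict_of_antitoneOn measurableSet_Ioi
    ((antitoneOn_tailIntegral hφ hg hg_nonneg).mono Ioi_subset_Ici_self) (μ := volume)
  have hderiv : AEMeasurable a' (volume.restrict (Ioi t₀)) :=
    (measurable_deriv a).aemeasurable.congr <| (ae_restrict_iff' measurableSet_Ioi).2 <|
      ae_of_all _ fun t ht => (ha' t ht).deriv
  exact (htail.mul hderiv).aestronglyMeasurable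

theorem integrableOn_mul_sub_iff_and_setIntegral_mul_sub_eq (hφ : Measurable φ)
    (hg : IntegrableOn g {x | t₀ < φ x} μ) (hg_nonneg : ∀ x, t₀ < φ x → 0 ≤ g x)
    (ha : ContinuousOn a (Ici t₀))
    (ha' : ∀ t ∈ Ioi t₀, HasDerivAt a (a' t) t) (ha'_nonneg : ∀ t ∈ Ioi t₀, 0 ≤ a' t) :
    (IntegrableOn (fun x => g x * (a (φ x) - a t₀)) {x | t₀ < φ x} μ ↔
      IntegrableOn (fun s => tailIntegral μ φ g s * a' s) (Ioi t₀)) ∧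
    ∫ x in {x | t₀ < φ x}, g x * (a (φ x) - a t₀) ∂μ =
      ∫ s in Ioi t₀, tailIntegral μ φ g s * a' s := by
  have hmono := monotoneOn_Ici_of_hasDerivAt_nonneg ha ha' ha'_nonneg
  have hPm : AEStronglyMeasurable (fun x => g x * (a (φ x) - a t₀)) (μ.restrict {x | t₀ < φ x}) :=
    hg.aestronglyMeasurable.mul
      ((aestronglyMeasurable_comp_restrict_setOf_lt hφ ha).sub aestronglyMeasurable_const)
  have hP0 : 0 ≤ᵐ[μ.restrict {x | t₀ < φ x}] fun x => g x * (a (φ x) - a t₀) :=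
    (ae_restrict_iff' (measurableSet_lt measurable_const hφ)).2 <| ae_of_all _
      fun x (hx : t₀ < φ x) => mul_nonneg (hg_nonneg x hx) <|
        sub_nonneg.2 (hmono self_mem_Ici (mem_Ici.2 hx.le) hx.le)
  have hQm := aestronglyMeasurable_tailIntegral_mul hφ hg hg_nonneg ha'
  have hQ0 : 0 ≤ᵐ[volume.restrict (Ioi t₀)] fun s => tailIntegral μ φ g s * a' s :=
    (ae_restrict_iff' measurableSet_Ioi).2 <| ae_of_all _ fun s (hs : t₀ < s) =>
      mul_nonneg (tailIntegral_nonneg hφ hs.le hg_nonneg) (ha'_nonneg s hs)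
  have hlayer :=
    lintegral_ofReal_mul_sub_eq_lintegral_ofReal_tailIntegral_mul hφ hg hg_nonneg ha ha' ha'_nonneg
  refine ⟨?_, ?_⟩
  · rw [IntegrableOn, IntegrableOn, Integrable, Integrable, and_iff_right hPm, and_iff_right hQm,
      hasFiniteIntegral_iff_ofReal hP0, hasFiniteIntegral_iff_ofReal hQ0, hlayer]
  · rw [integral_eq_lintegral_of_nonneg_ae hP0 hPm, integral_eq_lintegral_of_nonneg_ae hQ0 hQm,
      hlayer]

theorem integrableOn_mul_comp_iff (hφ : Measurable φ)
    (hg : IntegrableOn g {x | t₀ < φ x} μ) (hg_nonneg : ∀ x, t₀ < φ x → 0 ≤ g x)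
    (ha : ContinuousOn a (Ici t₀))
    (ha' : ∀ t ∈ Ioi t₀, HasDerivAt a (a' t) t) (ha'_nonneg : ∀ t ∈ Ioi t₀, 0 ≤ a' t) :
    IntegrableOn (fun x => g x * a (φ x)) {x | t₀ < φ x} μ ↔
      IntegrableOn (fun s => tailIntegral μ φ g s * a' s) (Ioi t₀) := by
  rw [← (integrableOn_mul_sub_iff_and_setIntegral_mul_sub_eq hφ hg hg_nonneg ha ha' ha'_nonneg).1,
    IntegrableOn, IntegrableOn, ← integrable_add_iff_integrable_left' (hg.mul_const (a t₀))
      (g := fun x => g x * (a (φ x) - a t₀))]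
  simp only [mul_sub, sub_add_cancel]

theorem setIntegral_mul_comp_eq (hφ : Measurable φ)
    (hg : IntegrableOn g {x | t₀ < φ x} μ) (hg_nonneg : ∀ x, t₀ < φ x → 0 ≤ g x)
    (ha : ContinuousOn a (Ici t₀))
    (ha' : ∀ t ∈ Ioi t₀, HasDerivAt a (a' t) t) (ha'_nonneg : ∀ t ∈ Ioi t₀, 0 ≤ a' t)
    (hga : IntegrableOn (fun x => g x * a (φ x)) {x | t₀ < φ x} μ) :
    ∫ x in {x | t₀ < φ x}, g x * a (φ x) ∂μ =
      tailIntegral μ φ g t₀ * a t₀ + ∫ s in Ioi t₀, tailIntegral μ φ g s * a' s := by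
  rw [← (integrableOn_mul_sub_iff_and_setIntegral_mul_sub_eq hφ hg hg_nonneg ha ha' ha'_nonneg).2,
    tailIntegral, ← integral_mul_const, ← integral_add (hg.mul_const _)]
  · simp only [mul_sub, add_sub_cancel]
  · simp only [mul_sub]
    exact hga.sub (hg.mul_const (a t₀))

theorem ae_mul_eq_of_ae_le_of_integral_eq {α : Type*} [MeasurableSpace α] {μ : Measure α}
    {u v w : α → ℝ} {p q : ℝ} (hw : ∀ᵐ x ∂μ, 0 < w x) (huv : ∀ᵐ x ∂μ, u x * q ≤ v x * p)
    (hu : Integrable (fun x => u x * w x) μ) (hv : Integrable (fun x => v x * w x) μ)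
    (h : (∫ x, u x * w x ∂μ) * q = (∫ x, v x * w x ∂μ) * p) :
    ∀ᵐ x ∂μ, u x * q = v x * p := by
  have hle : (fun x => u x * w x * q) ≤ᵐ[μ] fun x => v x * w x * p := by
    filter_upwards [hw, huv] with x hwx huvx
    nlinarith
  have heq := (integral_eq_iff_of_ae_le (hu.mul_const q) (hv.mul_const p) hle).1
    (by rw [integral_mul_const, integral_mul_const, h])
  filter_upwards [heq, hw] with x hx hwx
  exact mul_right_cancel₀ hwx.ne' (by linear_combination hx)

theorem setIntegral_Ioi_pos {h : ℝ → ℝ} (hh : IntegrableOn h (Ioi t₀))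
    (hpos : ∀ t ∈ Ioi t₀, 0 < h t) : 0 < ∫ t in Ioi t₀, h t := by
  have hsupp : Ioi t₀ ⊆ Function.support h := fun t ht => (hpos t ht).ne'
  rw [setIntegral_pos_iff_support_of_nonneg_ae
    ((ae_restrict_iff' measurableSet_Ioi).2 (ae_of_all _ fun t ht => (hpos t ht).le)) hh,
    inter_eq_right.2 hsupp]
  simp

theorem eq_of_ae_restrict_Ioi_eq_of_continuousWithinAt {u v : ℝ → ℝ} {t : ℝ} (ht : t₀ ≤ t)
    (huv : ∀ᵐ s ∂volume.restrict (Ioi t₀), u s = v s)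
    (hu : ContinuousWithinAt u (Ici t) t) (hv : ContinuousWithinAt v (Ici t) t) : u t = v t := by
  have hfreq : ∃ᶠ s in 𝓝[>] t, u s = v s := by
    intro hne
    obtain ⟨r, htr, hsub⟩ := mem_nhdsGT_iff_exists_Ioo_subset.1 hne
    have hnull : volume (Ioo t r) = 0 := by
      refine measure_mono_null (t := {s | ¬u s = v s} ∩ Ioi t₀)
        (fun s hs => ⟨hsub hs, lt_of_le_of_lt ht hs.1⟩) ?_
      rwa [ae_iff, Measure.restrict_apply' measurableSet_Ioi] at huv
    simp only [Real.volume_Ioo, ENNReal.ofReal_eq_zero, tsub_le_iff_right, zero_add] at hnull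
    exact (not_le.2 htr) hnull
  exact tendsto_nhds_unique_of_frequently_eq (hu.mono Ioi_subset_Ici_self)
    (hv.mono Ioi_subset_Ici_self) hfreq

theorem ae_tailIntegral_mul_eq_of_setIntegral_div_eq {Ω' : Type*} [MeasurableSpace Ω']
    {ν : Measure Ω'} {φ' g' : Ω' → ℝ}
    (hφ : Measurable φ) (hφ' : Measurable φ')
    (hg : IntegrableOn g {x | t₀ < φ x} μ) (hg' : IntegrableOn g' {y | t₀ < φ' y} ν)
    (hg_nonneg : ∀ x, t₀ < φ x → 0 ≤ g x) (hg'_nonneg : ∀ y, t₀ < φ' y → 0 ≤ g' y)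
    (hpos : 0 < tailIntegral μ φ g t₀) (hpos' : 0 < tailIntegral ν φ' g' t₀)
    (ha : ContinuousOn a (Ici t₀))
    (ha' : ∀ t ∈ Ioi t₀, HasDerivAt a (a' t) t) (ha'_pos : ∀ t ∈ Ioi t₀, 0 < a' t)
    (hga : IntegrableOn (fun x => g x * a (φ x)) {x | t₀ < φ x} μ)
    (hdom : ∀ s ∈ Ioi t₀, tailIntegral ν φ' g' s * tailIntegral μ φ g t₀ ≤
      tailIntegral μ φ g s * tailIntegral ν φ' g' t₀)
    (hmean : (∫ x in {x | t₀ < φ x}, g x * a (φ x) ∂μ) / tailIntegral μ φ g t₀ =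
      (∫ y in {y | t₀ < φ' y}, g' y * a (φ' y) ∂ν) / tailIntegral ν φ' g' t₀) :
    ∀ᵐ s ∂volume.restrict (Ioi t₀), tailIntegral ν φ' g' s * tailIntegral μ φ g t₀ =
      tailIntegral μ φ g s * tailIntegral ν φ' g' t₀ := by
  set F := tailIntegral μ φ g
  set G := tailIntegral ν φ' g'
  have ha'_nonneg : ∀ t ∈ Ioi t₀, 0 ≤ a' t := fun t ht => (ha'_pos t ht).le
  have hFa' : IntegrableOn (fun s => F s * a' s) (Ioi t₀) :=
    (integrableOn_mul_comp_iff hφ hg hg_nonneg ha ha' ha'_nonneg).1 hga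
  have hGa' : IntegrableOn (fun s => G s * a' s) (Ioi t₀) := by
    refine (hFa'.mul_const (G t₀ / F t₀)).mono'
      (aestronglyMeasurable_tailIntegral_mul hφ' hg' hg'_nonneg ha') ?_
    filter_upwards [ae_restrict_mem measurableSet_Ioi] with s hs
    rw [Real.norm_of_nonneg (mul_nonneg (tailIntegral_nonneg hφ' (le_of_lt hs) hg'_nonneg)
      (ha'_nonneg s hs)), mul_div_assoc', le_div_iff₀ hpos]
    linarith [mul_le_mul_of_nonneg_right (hdom s hs) (ha'_nonneg s hs)]
  have hga' := (integrableOn_mul_comp_iff hφ' hg' hg'_nonneg ha ha' ha'_nonneg).2 hGa'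
  rw [setIntegral_mul_comp_eq hφ hg hg_nonneg ha ha' ha'_nonneg hga,
    setIntegral_mul_comp_eq hφ' hg' hg'_nonneg ha ha' ha'_nonneg hga',
    div_eq_div_iff hpos.ne' hpos'.ne'] at hmean
  exact ae_mul_eq_of_ae_le_of_integral_eq
    ((ae_restrict_iff' measurableSet_Ioi).2 (ae_of_all _ ha'_pos))
    ((ae_restrict_iff' measurableSet_Ioi).2 (ae_of_all _ hdom)) hGa' hFa'
    (by linear_combination -hmean)

end

theorem stmt_5_general (T : ℝ) {X : Type*} [MeasurableSpace X] (μ : Measure X)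
    (f : X → ℝ) (hf_nonneg : ∀ x, 0 ≤ f x)
    (ψ : X → ℝ) (hψ_meas : Measurable ψ)
    (c : ℝ → ℝ)
    (hc_pos : ∀ t ∈ Ioi T, 0 < c t)
    (hc_int : IntegrableOn (fun t => c t * exp (-t)) (Ioi T))
    (a a' : ℝ → ℝ)
    (ha_cont : ContinuousOn a (Ici T))
    (ha_deriv : ∀ t ∈ Ioi T, HasDerivAt a (a' t) t)
    (t0 : ℝ) (ht0 : T ≤ t0)
    (hf_int : IntegrableOn f {y | ψ y < -t0} μ)
    (hf_pos : 0 < ∫ x in {y | ψ y < -t0}, f x ∂μ)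
    (haf_int : IntegrableOn (fun x => a (-ψ x) * f x) {y | ψ y < -t0} μ)
    (hratio : ∀ t ≥ t0,
      (∫ t1 in Ioi t, c t1 * exp (-t1)) / (∫ t1 in Ioi t0, c t1 * exp (-t1)) ≤
        (∫ x in {y | ψ y < -t}, f x ∂μ) / (∫ x in {y | ψ y < -t0}, f x ∂μ))
    (ha'_pos : ∀ t > t0, 0 < a' t)
    (heq : (∫ x in {y | ψ y < -t0}, a (-ψ x) * f x ∂μ) / (∫ x in {y | ψ y < -t0}, f x ∂μ) =
      (∫ t in Ioi t0, c t * exp (-t) * a t) / (∫ t in Ioi t0, c t * exp (-t)))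
    (hrc : ∀ t ≥ t0, ContinuousWithinAt (fun s => ∫ x in {y | ψ y < -s}, f x ∂μ) (Ici t) t) :
    ∀ t ≥ t0,
      (∫ x in {y | ψ y < -t}, f x ∂μ) / (∫ x in {y | ψ y < -t0}, f x ∂μ) =
        (∫ t1 in Ioi t, c t1 * exp (-t1)) / (∫ t1 in Ioi t0, c t1 * exp (-t1)) := by
  have hset : ∀ s, {x | s < -ψ x} = {y | ψ y < -s} := fun s => by ext; simp [lt_neg]
  have hF : ∀ s, ∫ x in {y | ψ y < -s}, f x ∂μ = tailIntegral μ (fun x => -ψ x) f s :=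
    fun s => by rw [tailIntegral, hset]
  rw [← hset] at hf_int haf_int heq
  simp only [mul_comm (a _) (f _)] at haf_int heq
  simp only [hF] at hf_pos hratio heq hrc ⊢
  have hce_pos : ∀ t ∈ Ioi t0, 0 < c t * exp (-t) := fun t ht =>
    mul_pos (hc_pos t (ht0.trans_lt ht)) (exp_pos _)
  have hce_int : IntegrableOn (fun t => c t * exp (-t)) (Ioi t0) :=
    hc_int.mono_set (Ioi_subset_Ioi ht0)
  have hG_pos := setIntegral_Ioi_pos hce_int hce_pos
  have hae := ae_tailIntegral_mul_eq_of_setIntegral_div_eq (φ := fun x => -ψ x) hψ_meas.neg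
    measurable_id' hf_int hce_int (fun x _ => hf_nonneg x) (fun t ht => (hce_pos t ht).le)
    hf_pos hG_pos (ha_cont.mono (Ici_subset_Ici.2 ht0))
    (fun t ht => ha_deriv t (ht0.trans_lt ht)) ha'_pos haf_int
    (fun s hs => (div_le_div_iff₀ hG_pos hf_pos).1 (hratio s hs.le)) heq
  intro t ht
  rw [div_eq_div_iff hf_pos.ne' hG_pos.ne']
  have hGc : ContinuousWithinAt (fun s => ∫ t1 in Ioi s, c t1 * exp (-t1)) (Ici t) t :=
    (hc_int.continuousOn_Ici_primitive_Ioi t (ht0.trans ht)).mono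
      (Ici_subset_Ici.2 (ht0.trans ht))
  exact (eq_of_ae_restrict_Ioi_eq_of_continuousWithinAt ht hae (hGc.mul_const _)
    ((hrc t ht).mul_const _)).symm

theorem stmt_5 (T : ℝ) {X : Type*} [MeasurableSpace X] (μ : Measure X)
    (f : X → ℝ) (hf_meas : Measurable f) (hf_nonneg : ∀ x, 0 ≤ f x)
    (ψ : X → ℝ) (hψ_meas : Measurable ψ) (hψ : ∀ x, ψ x < -T)
    (c : ℝ → ℝ)
    (hc_cont : ContinuousOn c (Ioi T))
    (hc_pos : ∀ t ∈ Ioi T, 0 < c t)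
    (hc_int : IntegrableOn (fun t => c t * exp (-t)) (Ioi T))
    (a a' : ℝ → ℝ)
    (ha_pos : ∀ t ∈ Ici T, 0 < a t)
    (ha_mono : MonotoneOn a (Ici T))
    (ha_cont : ContinuousOn a (Ici T))
    (ha_deriv : ∀ t ∈ Ioi T, HasDerivAt a (a' t) t)
    (ha'_cont : ContinuousOn a' (Ioi T))
    (hlim : Tendsto (fun t => a t * ∫ t1 in Ioi t, c t1 * exp (-t1)) atTop (nhds 0))
    (t0 : ℝ) (ht0 : T ≤ t0)
    (hf_int : IntegrableOn f {y | ψ y < -t0} μ)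
    (hf_pos : 0 < ∫ x in {y | ψ y < -t0}, f x ∂μ)
    (haf_int : IntegrableOn (fun x => a (-ψ x) * f x) {y | ψ y < -t0} μ)
    (hratio : ∀ t ≥ t0,
      (∫ t1 in Ioi t, c t1 * exp (-t1)) / (∫ t1 in Ioi t0, c t1 * exp (-t1)) ≤
        (∫ x in {y | ψ y < -t}, f x ∂μ) / (∫ x in {y | ψ y < -t0}, f x ∂μ))
    (ha'_pos : ∀ t > t0, 0 < a' t)
    (heq : (∫ x in {y | ψ y < -t0}, a (-ψ x) * f x ∂μ) / (∫ x in {y | ψ y < -t0}, f x ∂μ) =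
      (∫ t in Ioi t0, c t * exp (-t) * a t) / (∫ t in Ioi t0, c t * exp (-t)))
    (hrc : ∀ t ≥ t0, ContinuousWithinAt (fun s => ∫ x in {y | ψ y < -s}, f x ∂μ) (Ici t) t) :
    ∀ t ≥ t0,
      (∫ x in {y | ψ y < -t}, f x ∂μ) / (∫ x in {y | ψ y < -t0}, f x ∂μ) =
        (∫ t1 in Ioi t, c t1 * exp (-t1)) / (∫ t1 in Ioi t0, c t1 * exp (-t1)) :=
  stmt_5_general T μ f hf_nonneg ψ hψ_meas c hc_pos hc_int a a' ha_cont ha_deriv t0 ht0 hf_int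
    hf_pos haf_int hratio ha'_pos heq hrc
end

section
/- Let $G : [T,+\infty) \to \mathbb{R}$ be decreasing with $G(T) < +\infty$, and let $g(t) = \int_t^{+\infty} c(t_1)e^{-t_1}dt_1$ for positive continuous $c$ with $g(T) < \infty$. Suppose that for all $t_1 \ge T$ and $t_0 \ge 0$: $\frac{G(t_1) - G(t_1+t_0)}{g(t_1) - g(t_1+t_0)} \le \liminf_{B\to 0^+} \frac{G(t_0+t_1) - G(t_0+t_1+B)}{g(t_0+t_1) - g(t_0+t_1+B)}$, and that $G$ is lower semicontinuous. Then $r \mapsto G(g^{-1}(r))$ is concave on $(0, g(T)]$. -/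
/-!
Write `r = g t`, so that `g` is a decreasing homeomorphism of `[T, ∞)` onto `(0, g T]`.
Concavity of `G ∘ g⁻¹` says: for `a < z < b` and `k` the slope of the chord, `H = G - k • g`
satisfies `H z ≥ H a = H b`. Otherwise the lower semicontinuous `H` attains its minimum over
`[a, b]` at an interior point `s` with `H s < H a`. Minimality makes every right difference
quotient of `G` against `g` at `s` at most `k`, while `H s < H a` makes the quotient over
`[a, s]` exceed `k`, contradicting the hypothesis on the quotients.
-/

open MeasureTheory Real Set Filter Topology

lemma strictAntiOn_integral_Ioi {f : ℝ → ℝ} {T : ℝ} (hf : IntegrableOn f (Ioi T))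
    (hf_pos : ∀ t ∈ Ioi T, 0 < f t) : StrictAntiOn (fun t => ∫ x in Ioi t, f x) (Ici T) := by
  intro s (hs : T ≤ s) t _ hst
  have hpos : 0 < ∫ x in s..t, f x :=
    intervalIntegral.intervalIntegral_pos_of_pos_on
      ((intervalIntegrable_iff_integrableOn_Ioc_of_le hst.le).2
        (hf.mono_set fun x hx => hs.trans_lt hx.1))
      (fun x hx => hf_pos x (hs.trans_lt hx.1)) hst
  have := intervalIntegral.integral_Ioi_sub_Ioi (hf.mono_set (Ioi_subset_Ioi hs)) hst.le
  simp only
  linarith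

lemma concaveOn_of_chord_le {s : Set ℝ} {φ : ℝ → ℝ} (hs : Convex ℝ s)
    (h : ∀ ⦃x y z⦄, x ∈ s → z ∈ s → x < y → y < z → ∀ k : ℝ,
      φ z - k * z = φ x - k * x → φ x - k * x ≤ φ y - k * y) :
    ConcaveOn ℝ s φ := by
  refine concaveOn_iff_slope_anti_adjacent.2 ⟨hs, fun x y z hx hz hxy hyz => ?_⟩
  set k := (φ z - φ x) / (z - x)
  have hk : k * (z - x) = φ z - φ x := div_mul_cancel₀ _ (by linarith)
  have hchord := h hx hz hxy hyz k (by linarith)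
  calc (φ z - φ y) / (z - y) ≤ k := by rw [div_le_iff₀ (by linarith)]; nlinarith
    _ ≤ (φ y - φ x) / (y - x) := by rw [le_div_iff₀ (by linarith)]; nlinarith

section ConcavityCriterion

variable {T : ℝ} {g G : ℝ → ℝ}

lemma liminf_diffQuot_le_of_forall_le (hg : StrictAntiOn g (Ici T)) (hG : AntitoneOn G (Ici T))
    {k s t : ℝ} (hs : T ≤ s) (hst : s < t)
    (hmin : ∀ u ∈ Ioc s t, G s - k * g s ≤ G u - k * g u) :
    liminf (fun B => (G s - G (s + B)) / (g s - g (s + B))) (𝓝[>] 0) ≤ k := by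
  have hden : ∀ B > (0 : ℝ), 0 < g s - g (s + B) := fun B hB =>
    sub_pos.2 (hg hs (show T ≤ s + B by linarith) (by linarith))
  refine liminf_le_of_frequently_le ?_ ?_
  · refine Eventually.frequently ?_
    filter_upwards [Ioc_mem_nhdsGT (sub_pos.2 hst)] with B ⟨hB, hBt⟩
    rw [div_le_iff₀ (hden B hB)]
    linarith [hmin (s + B) ⟨by linarith, by linarith⟩]
  -- Without this lower bound the `liminf` in `ℝ` would be a junk value.
  · refine isBoundedUnder_of_eventually_ge (a := 0) ?_
    filter_upwards [self_mem_nhdsWithin] with B (hB : 0 < B)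
    exact div_nonneg (sub_nonneg.2 (hG hs (show T ≤ s + B by linarith) (by linarith)))
      (hden B hB).le

lemma le_sub_mul_of_forall_diffQuot_le_liminf (hg_cont : ContinuousOn g (Ici T))
    (hg : StrictAntiOn g (Ici T)) (hG : AntitoneOn G (Ici T))
    (hG_lsc : LowerSemicontinuousOn G (Ici T))
    (hquot : ∀ s t, T ≤ s → s ≤ t → (G s - G t) / (g s - g t) ≤
      liminf (fun B => (G t - G (t + B)) / (g t - g (t + B))) (𝓝[>] 0))
    {a b z k : ℝ} (ha : T ≤ a) (haz : a < z) (hzb : z < b)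
    (hk : G a - k * g a = G b - k * g b) :
    G b - k * g b ≤ G z - k * g z := by
  by_contra! hz
  set H := fun t => G t - k * g t
  have hIcc : Icc a b ⊆ Ici T := fun t ht => ha.trans ht.1
  have hH : LowerSemicontinuousOn H (Icc a b) :=
    (hG_lsc.mono hIcc).add ((continuousOn_const.mul (hg_cont.mono hIcc)).neg.lowerSemicontinuousOn)
  obtain ⟨s, hs, hmin⟩ := hH.exists_isMinOn ⟨a, left_mem_Icc.2 (haz.trans hzb).le⟩ isCompact_Icc
  have hHs : H s < H b := (hmin ⟨haz.le, hzb.le⟩).trans_lt hz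
  have has : a < s := hs.1.lt_of_ne (by rintro rfl; exact hHs.ne hk)
  have hsb : s < b := hs.2.lt_of_ne (by rintro rfl; exact hHs.ne rfl)
  have hlt : k < (G a - G s) / (g a - g s) := by
    rw [lt_div_iff₀ (sub_pos.2 (hg ha (ha.trans hs.1) has))]
    simp only [H] at hHs
    linarith
  have hle := liminf_diffQuot_le_of_forall_le hg hG (hIcc hs) hsb
    fun u hu => hmin ⟨has.le.trans hu.1.le, hu.2⟩
  exact (hlt.trans_le ((hquot a s ha has.le).trans hle)).false

end ConcavityCriterion

theorem stmt_16_general (T : ℝ) (c : ℝ → ℝ)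
    (hc_pos : ∀ t ∈ Ioi T, 0 < c t)
    (hc_int : IntegrableOn (fun t => c t * exp (-t)) (Ioi T))
    (g : ℝ → ℝ) (hg : ∀ t, g t = ∫ t1 in Ioi t, c t1 * exp (-t1))
    (ginv : ℝ → ℝ)
    (hginv₁ : ∀ t ∈ Ici T, ginv (g t) = t)
    (G : ℝ → ℝ)
    (hG_dec : AntitoneOn G (Ici T))
    (hG_lsc : LowerSemicontinuousOn G (Ici T))
    (hquot : ∀ t1 ≥ T, ∀ t0 ≥ (0 : ℝ),
      (G t1 - G (t1 + t0)) / (g t1 - g (t1 + t0)) ≤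
        liminf (fun B => (G (t0 + t1) - G (t0 + t1 + B)) / (g (t0 + t1) - g (t0 + t1 + B)))
          (nhdsWithin 0 (Ioi 0))) :
    ConcaveOn ℝ (Ioc 0 (g T)) (fun r => G (ginv r)) := by
  have hg_eq : g = fun t => ∫ x in Ioi t, c x * exp (-x) := funext hg
  have hg_anti : StrictAntiOn g (Ici T) := hg_eq ▸
    strictAntiOn_integral_Ioi hc_int fun t ht => mul_pos (hc_pos t ht) (exp_pos _)
  have hg_cont : ContinuousOn g (Ici T) := hg_eq ▸ hc_int.continuousOn_Ici_primitive_Ioi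
  have hg_surj : Ioc 0 (g T) ⊆ g '' Ici T := isPreconnected_Ici.intermediate_value_Ioc
    self_mem_Ici (le_principal_iff.2 (Ici_mem_atTop T)) hg_cont
    (hg_eq ▸ tendsto_integral_Ioi_zero tendsto_id)
  refine concaveOn_of_chord_le (convex_Ioc _ _) fun x y z hx hz hxy hyz k hk => ?_
  obtain ⟨a, ha, rfl⟩ := hg_surj hz
  obtain ⟨b, hb, rfl⟩ := hg_surj hx
  obtain ⟨t, ht, rfl⟩ := hg_surj (show y ∈ _ from ⟨hx.1.trans hxy, hyz.le.trans hz.2⟩)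
  simp only [hginv₁ _ ha, hginv₁ _ hb, hginv₁ _ ht] at hk ⊢
  refine le_sub_mul_of_forall_diffQuot_le_liminf hg_cont hg_anti hG_dec hG_lsc
    (fun s u hs hsu => ?_) ha ((hg_anti.lt_iff_gt ht ha).1 hyz) ((hg_anti.lt_iff_gt hb ht).1 hxy) hk
  simpa only [add_sub_cancel, sub_add_cancel] using hquot s hs (u - s) (sub_nonneg.2 hsu)

theorem stmt_16 (T : ℝ) (c : ℝ → ℝ)
    (hc_cont : ContinuousOn c (Ioi T))
    (hc_pos : ∀ t ∈ Ioi T, 0 < c t)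
    (hc_int : IntegrableOn (fun t => c t * exp (-t)) (Ioi T))
    (g : ℝ → ℝ) (hg : ∀ t, g t = ∫ t1 in Ioi t, c t1 * exp (-t1))
    (ginv : ℝ → ℝ)
    (hginv₁ : ∀ t ∈ Ici T, ginv (g t) = t)
    (hginv₂ : ∀ r ∈ Ioc 0 (g T), g (ginv r) = r)
    (G : ℝ → ℝ)
    (hG_dec : AntitoneOn G (Ici T))
    (hG_lsc : LowerSemicontinuousOn G (Ici T))
    (hquot : ∀ t1 ≥ T, ∀ t0 ≥ (0 : ℝ),
      (G t1 - G (t1 + t0)) / (g t1 - g (t1 + t0)) ≤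
        liminf (fun B => (G (t0 + t1) - G (t0 + t1 + B)) / (g (t0 + t1) - g (t0 + t1 + B)))
          (nhdsWithin 0 (Ioi 0))) :
    ConcaveOn ℝ (Ioc 0 (g T)) (fun r => G (ginv r)) :=
  stmt_16_general T c hc_pos hc_int g hg ginv hginv₁ G hG_dec hG_lsc hquot
end

section
/- Let $c > 0$ be continuous on $(T,+\infty)$ with $c(t)e^{-t}$ decreasing and $\int_T^{+\infty} c(t)e^{-t}dt < \infty$, and let $\tilde{c} > 0$ be continuous on $(T,+\infty)$ such that $\tilde{c}/c$ is decreasing (equivalently $(\log\tilde{c})' \le (\log c)'$ when differentiable). Let $\mu, f \ge 0, \psi < -T$ be as before with $\int_{\{\psi<-t\}} f\,d\mu = k\int_t^{+\infty} c(t_1)e^{-t_1}dt_1$ for some constant $k > 0$ and all $t \ge T$. Then for all $t \ge T$: $\int_{\{\psi<-t\}} \frac{\tilde{c}(-\psi)}{c(-\psi)} f\,d\mu = k\int_t^{+\infty} \tilde{c}(t_1)e^{-t_1}\,dt_1$, provided $\tilde{c}/c$ extends continuously to $[T,+\infty)$ and $\lim_{t\to+\infty} \frac{\tilde c(t)}{c(t)}\int_t^{+\infty}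 c(t_1)e^{-t_1}dt_1 = 0$. -/
/-!
Push the measure `f dμ` restricted to `{t < -ψ}` forward along `-ψ`. The hypothesis on the
masses of the superlevel sets says that this pushforward and `k c(s) e^{-s} ds` on `(t, ∞)` give
the same mass to every ray `(s, ∞)`, `s ≥ t`, and neither charges `(-∞, t]`; hence the two
measures coincide, and integrating `c̃ / c` against them gives the identity.
-/

open MeasureTheory Real Set Filter
open scoped ENNReal

namespace MeasureTheory.Measure

lemma measure_univ_eq_measure_Ioi_of_Iic_eq_zero {α : Type*} [TopologicalSpace α] [LinearOrder α]
    [ClosedIicTopology α] [MeasurableSpace α] [OpensMeasurableSpace α] (μ : Measure α) {t : α}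
    (ht : μ (Iic t) = 0) : μ univ = μ (Ioi t) := by
  rw [← compl_Iic, measure_compl measurableSet_Iic (ht ▸ ENNReal.zero_ne_top), ht, tsub_zero]

theorem ext_of_Ioi_of_Iic_eq_zero {α : Type*} [TopologicalSpace α] [MeasurableSpace α]
    [SecondCountableTopology α] [LinearOrder α] [OrderTopology α] [BorelSpace α]
    {μ ν : Measure α} {t : α} (hfin : μ (Ioi t) ≠ ∞) (hμ : μ (Iic t) = 0) (hν : ν (Iic t) = 0)
    (h : ∀ s, t ≤ s → μ (Ioi s) = ν (Ioi s)) :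
    μ = ν := by
  have huniv : μ univ = ν univ := by
    rw [measure_univ_eq_measure_Ioi_of_Iic_eq_zero μ hμ,
      measure_univ_eq_measure_Ioi_of_Iic_eq_zero ν hν, h t le_rfl]
  have : IsFiniteMeasure μ :=
    ⟨(measure_univ_eq_measure_Ioi_of_Iic_eq_zero μ hμ).symm ▸ hfin.lt_top⟩
  have : IsFiniteMeasure ν := ⟨huniv ▸ measure_lt_top μ univ⟩
  refine ext_of_Iic μ ν fun a => ?_
  rcases le_total a t with hat | hta
  · rw [measure_mono_null (Iic_subset_Iic.2 hat) hμ, measure_mono_null (Iic_subset_Iic.2 hat) hν]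
  · rw [← compl_Ioi, measure_compl measurableSet_Ioi (measure_ne_top _ _),
      measure_compl measurableSet_Ioi (measure_ne_top _ _), huniv, h a hta]

end MeasureTheory.Measure

section Distribution

open Measure

variable {X : Type*} [MeasurableSpace X] {μ : Measure X} {φ f : X → ℝ}

lemma integral_map_withDensity_ofReal (hφ : Measurable φ) (hf : AEMeasurable f μ)
    (hf_nonneg : 0 ≤ᵐ[μ] f) {a : ℝ → ℝ}
    (ha : AEStronglyMeasurable a ((μ.withDensity fun x => ENNReal.ofReal (f x)).map φ)) :
    ∫ u, a u ∂(μ.withDensity fun x => ENNReal.ofReal (f x)).map φ = ∫ x, a (φ x) * f x ∂μ := by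
  rw [integral_map hφ.aemeasurable ha, integral_withDensity_eq_integral_toReal_smul₀
    hf.ennreal_ofReal (ae_of_all _ fun _ => ENNReal.ofReal_lt_top)]
  refine integral_congr_ae (hf_nonneg.mono fun x hx => ?_)
  simp only [ENNReal.toReal_ofReal hx, smul_eq_mul, mul_comm]

variable {t : ℝ}

lemma map_withDensity_restrict_apply_Iic (hφ : Measurable φ) :
    ((μ.restrict {x | t < φ x}).withDensity fun x => ENNReal.ofReal (f x)).map φ (Iic t) = 0 := by
  rw [map_apply hφ measurableSet_Iic]
  refine withDensity_absolutelyContinuous _ _ ?_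
  have hdisj : Disjoint (φ ⁻¹' Iic t) {x | t < φ x} :=
    disjoint_left.2 fun x (hx : φ x ≤ t) hx' => hx.not_gt hx'
  rw [restrict_apply (hφ measurableSet_Iic), hdisj.inter_eq, measure_empty]

lemma map_withDensity_restrict_apply_Ioi (hφ : Measurable φ)
    (hf_nonneg : ∀ x, t < φ x → 0 ≤ f x) {s : ℝ} (hts : t ≤ s)
    (hf : IntegrableOn f {x | s < φ x} μ) :
    ((μ.restrict {x | t < φ x}).withDensity fun x => ENNReal.ofReal (f x)).map φ (Ioi s) =
      ENNReal.ofReal (∫ x in {x | s < φ x}, f x ∂μ) := by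
  have hs : MeasurableSet (φ ⁻¹' Ioi s) := hφ measurableSet_Ioi
  have hsub : φ ⁻¹' Ioi s ⊆ {x | t < φ x} := fun x hx => hts.trans_lt hx
  rw [map_apply hφ measurableSet_Ioi, withDensity_apply _ hs, Measure.restrict_restrict hs,
    inter_eq_left.2 hsub, ofReal_integral_eq_lintegral_ofReal hf
      (ae_restrict_of_forall_mem hs fun x hx => hf_nonneg x (hts.trans_lt hx))]
  rfl

theorem setIntegral_comp_mul_eq_of_setIntegral_superlevel_eq {g a : ℝ → ℝ} (hφ : Measurable φ)
    (hf_nonneg : ∀ x, t < φ x → 0 ≤ f x) (hg_nonneg : ∀ u, t < u → 0 ≤ g u)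
    (hf : IntegrableOn f {x | t < φ x} μ) (hg : IntegrableOn g (Ioi t))
    (ha : AEStronglyMeasurable a (volume.restrict (Ioi t)))
    (hmass : ∀ s, t ≤ s → ∫ x in {x | s < φ x}, f x ∂μ = ∫ u in Ioi s, g u) :
    ∫ x in {x | t < φ x}, a (φ x) * f x ∂μ = ∫ u in Ioi t, a u * g u := by
  set ρf := ((μ.restrict {x | t < φ x}).withDensity fun x => ENNReal.ofReal (f x)).map φ
  set ρg := ((volume.restrict {u : ℝ | t < id u}).withDensity fun u => ENNReal.ofReal (g u)).map id
  have hρ : ρf = ρg := by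
    refine ext_of_Ioi_of_Iic_eq_zero ?_ (map_withDensity_restrict_apply_Iic hφ)
      (map_withDensity_restrict_apply_Iic measurable_id) fun s hs => ?_
    · rw [map_withDensity_restrict_apply_Ioi hφ hf_nonneg le_rfl hf]
      exact ENNReal.ofReal_ne_top
    · rw [map_withDensity_restrict_apply_Ioi hφ hf_nonneg hs
          (hf.mono_set fun x hx => hs.trans_lt hx),
        map_withDensity_restrict_apply_Ioi measurable_id hg_nonneg hs
          (hg.mono_set (Ioi_subset_Ioi hs)), hmass s hs]
      rfl
  have haρg : AEStronglyMeasurable a ρg := by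
    simp only [ρg, Measure.map_id]
    exact ha.mono_ac (withDensity_absolutelyContinuous _ _)
  have haρf : AEStronglyMeasurable a ρf := hρ ▸ haρg
  have hset : MeasurableSet {x | t < φ x} := hφ measurableSet_Ioi
  calc ∫ x in {x | t < φ x}, a (φ x) * f x ∂μ = ∫ u, a u ∂ρf :=
        (integral_map_withDensity_ofReal hφ hf.aestronglyMeasurable.aemeasurable
          (ae_restrict_of_forall_mem hset hf_nonneg) haρf).symm
    _ = ∫ u, a u ∂ρg := by rw [hρ]
    _ = ∫ u in Ioi t, a u * g u :=
        integral_map_withDensity_ofReal measurable_id hg.aestronglyMeasurable.aemeasurable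
          (ae_restrict_of_forall_mem measurableSet_Ioi hg_nonneg) haρg

end Distribution

theorem stmt_19_general (T : ℝ) {X : Type*} [MeasurableSpace X] (μ : Measure X)
    (f : X → ℝ) (hf_nonneg : ∀ x, 0 ≤ f x)
    (ψ : X → ℝ) (hψ_meas : Measurable ψ)
    (c : ℝ → ℝ)
    (hc_pos : ∀ t ∈ Ioi T, 0 < c t)
    (hc_int : IntegrableOn (fun t => c t * exp (-t)) (Ioi T))
    (ctil : ℝ → ℝ)
    (hquot_cont : ContinuousOn (fun t => ctil t / c t) (Ici T))
    (hf_int : IntegrableOn f {y | ψ y < -T} μ)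
    (k : ℝ) (hk : 0 < k)
    (hmass : ∀ t ≥ T, ∫ x in {y | ψ y < -t}, f x ∂μ = k * ∫ t1 in Ioi t, c t1 * exp (-t1)) :
    ∀ t ≥ T, ∫ x in {y | ψ y < -t}, (ctil (-ψ x) / c (-ψ x)) * f x ∂μ =
      k * ∫ t1 in Ioi t, ctil t1 * exp (-t1) := by
  intro t ht
  have hset : ∀ s : ℝ, {y | ψ y < -s} = {x | s < -ψ x} := fun s => by ext; simp [lt_neg]
  have hc_nonneg : ∀ u, t < u → 0 ≤ k * (c u * exp (-u)) := fun u hu => by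
    have := hc_pos u (ht.trans_lt hu)
    positivity
  rw [hset, setIntegral_comp_mul_eq_of_setIntegral_superlevel_eq (φ := fun x => -ψ x)
    (a := fun u => ctil u / c u) hψ_meas.neg (fun x _ => hf_nonneg x) hc_nonneg
    ((hset T ▸ hf_int).mono_set fun x hx => ht.trans_lt hx)
    ((hc_int.mono_set (Ioi_subset_Ioi ht)).const_mul k)
    ((hquot_cont.mono (Ioi_subset_Ici ht)).aestronglyMeasurable measurableSet_Ioi)
    fun s hs => by rw [← hset, hmass s (ht.trans hs), integral_const_mul],
    ← integral_const_mul]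
  refine setIntegral_congr_fun measurableSet_Ioi fun u hu => ?_
  have := (hc_pos u (ht.trans_lt hu)).ne'
  field_simp

theorem stmt_19 (T : ℝ) {X : Type*} [MeasurableSpace X] (μ : Measure X)
    (f : X → ℝ) (hf_meas : Measurable f) (hf_nonneg : ∀ x, 0 ≤ f x)
    (ψ : X → ℝ) (hψ_meas : Measurable ψ) (hψ : ∀ x, ψ x < -T)
    (c : ℝ → ℝ)
    (hc_cont : ContinuousOn c (Ioi T))
    (hc_pos : ∀ t ∈ Ioi T, 0 < c t)
    (hc_dec : ∀ s ∈ Ioi T, ∀ t ∈ Ioi T, s ≤ t → c t * exp (-t) ≤ c s * exp (-s))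
    (hc_int : IntegrableOn (fun t => c t * exp (-t)) (Ioi T))
    (ctil : ℝ → ℝ)
    (hctil_cont : ContinuousOn ctil (Ioi T))
    (hctil_pos : ∀ t ∈ Ioi T, 0 < ctil t)
    (hquot_dec : AntitoneOn (fun t => ctil t / c t) (Ioi T))
    (hquot_cont : ContinuousOn (fun t => ctil t / c t) (Ici T))
    (hlim : Tendsto (fun t => ctil t / c t * ∫ t1 in Ioi t, c t1 * exp (-t1)) atTop (nhds 0))
    (hf_int : IntegrableOn f {y | ψ y < -T} μ)
    (k : ℝ) (hk : 0 < k)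
    (hmass : ∀ t ≥ T, ∫ x in {y | ψ y < -t}, f x ∂μ = k * ∫ t1 in Ioi t, c t1 * exp (-t1)) :
    ∀ t ≥ T, ∫ x in {y | ψ y < -t}, (ctil (-ψ x) / c (-ψ x)) * f x ∂μ =
      k * ∫ t1 in Ioi t, ctil t1 * exp (-t1) :=
  stmt_19_general T μ f hf_nonneg ψ hψ_meas c hc_pos hc_int ctil hquot_cont hf_int k hk hmass
end
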